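/- Let $w \in A_1$ on $\mathbb{R}^n$, $m \ge 1$, and let $\{Q_j = Q(c_j, r_j)\}_{j\ge1}$ be pairwise disjoint cubes with union $\Omega$ and $\Omega^* = \bigcup_j 2\sqrt{n}\,Q_j$. Then for any $\delta > 0$, $\sum_{j=1}^{\infty} \int_{Q_j} w(y)^{1/m} \int_{\mathbb{R}^n \setminus \Omega^*} \frac{r_j^{\delta}\, w(x)^{(m-1)/m}}{|x - y|^{n+\delta}}\,dx\,dy \le C_{n,m,\delta}\, [w]_{A_1}^{(2m-2)/m}\, w(\Omega)$. -/

import Mathlib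

open MeasureTheory ENNReal Set Filter

noncomputable section

abbrev Rn (n : ℕ) := EuclideanSpace ℝ (Fin n)

def cube {n : ℕ} (c : Rn n) (r : ℝ) : Set (Rn n) := {x | ∀ i, |x i - c i| ≤ r / 2}

def A1Bound {n : ℕ} (w : Rn n → ℝ) (C : ℝ) : Prop :=
  ∀ (c : Rn n) (r : ℝ), 0 < r →
    ∫ x in cube c r, w x ≤
      C * (volume (cube c r)).toReal * essInf w (volume.restrict (cube c r))

/-! For `y ∈ Q = Q(c, r)` and `x ∉ 2√n Q`, split the `x`-integral into the dyadic annuli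
`√n r 2ᵏ ≤ |x - c| < √n r 2ᵏ⁺¹`. There `|x - y| ≥ √n r 2ᵏ / 2`, and the annulus lies in the cube
`Q'` of side `√n r 2ᵏ⁺²`. Hölder's inequality and the `A₁` condition give
`∫_{Q'} w^γ ≤ |Q'| ([w]_{A₁} ⨍_Q w)^γ`, because the essential infimum of `w` on `Q'` is at most
its average on the subcube `Q`. The annuli therefore contribute a geometric series in `2^(-δ)`,
so the inner integral is `≲ ([w]_{A₁} ⨍_Q w)^γ` with `γ = (m-1)/m`. Integrating against `w^{1/m}`
over `Q` and using Hölder once more gives `≲ [w]_{A₁}^γ w(Q)`; summing over the disjoint cubes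
and using `[w]_{A₁} ≥ 1` gives the claim. -/

section

variable {n : ℕ}

lemma cube_eq_preimage (c : Rn n) (r : ℝ) :
    cube c r = WithLp.ofLp ⁻¹' univ.pi fun i => Icc (c i - r / 2) (c i + r / 2) := by
  ext x
  simp only [cube, abs_le, mem_ofPred_eq, mem_preimage, mem_univ_pi, mem_Icc]
  exact forall_congr' fun i => and_congr (by constructor <;> intro <;> linarith)
    (by constructor <;> intro <;> linarith)

lemma isCompact_cube (c : Rn n) (r : ℝ) : IsCompact (cube c r) := by
  rw [cube_eq_preimage]
  exact (PiLp.homeomorph 2 _).isCompact_preimage.2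
    (isCompact_univ_pi fun _ => isCompact_Icc)

lemma measurableSet_cube (c : Rn n) (r : ℝ) : MeasurableSet (cube c r) :=
  (isCompact_cube c r).isClosed.measurableSet

lemma volume_cube (c : Rn n) {r : ℝ} (hr : 0 ≤ r) :
    volume (cube c r) = ENNReal.ofReal (r ^ n) := by
  rw [cube_eq_preimage, (PiLp.volume_preserving_ofLp _).measure_preimage
    (MeasurableSet.univ_pi fun _ => measurableSet_Icc).nullMeasurableSet, volume_pi_pi]
  simp [Real.volume_Icc, ENNReal.ofReal_pow hr]

lemma cube_mono (c : Rn n) {r s : ℝ} (h : r ≤ s) : cube c r ⊆ cube c s :=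
  fun _ hx i => (hx i).trans (by linarith)

lemma norm_sub_le_of_mem_cube {c y : Rn n} {r : ℝ} (hr : 0 ≤ r) (hy : y ∈ cube c r) :
    ‖y - c‖ ≤ √n * r / 2 := by
  rw [EuclideanSpace.norm_eq, mul_div_assoc, ← Real.sqrt_sq (by positivity : 0 ≤ r / 2),
    ← Real.sqrt_mul n.cast_nonneg]
  refine Real.sqrt_le_sqrt ?_
  have h : ∀ i ∈ Finset.univ, ‖(y - c) i‖ ^ 2 ≤ (r / 2) ^ 2 := fun i _ =>
    (sq_le_sq₀ (norm_nonneg _) (by positivity)).2 (by simpa using hy i)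
  simpa using Finset.sum_le_card_nsmul Finset.univ _ _ h

lemma ball_subset_cube (c : Rn n) (r : ℝ) : Metric.ball c (r / 2) ⊆ cube c r := fun x hx i =>
  (by simpa using PiLp.norm_apply_le (x - c) i : |x i - c i| ≤ ‖x - c‖).trans
    (mem_ball_iff_norm.1 hx).le

lemma lintegral_ofReal_rpow_le {α : Type*} [MeasurableSpace α] {μ : Measure α} {f : α → ℝ}
    (hf : AEMeasurable f μ) (hf0 : 0 ≤ᵐ[μ] f) {γ : ℝ} (hγ0 : 0 ≤ γ) (hγ1 : γ ≤ 1) :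
    ∫⁻ a, ENNReal.ofReal (f a ^ γ) ∂μ ≤
      (∫⁻ a, ENNReal.ofReal (f a) ∂μ) ^ γ * μ univ ^ (1 - γ) := by
  have hpow : ∫⁻ a, ENNReal.ofReal (f a ^ γ) ∂μ = ∫⁻ a, ENNReal.ofReal (f a) ^ γ * 1 ∂μ :=
    lintegral_congr_ae <| hf0.mono fun a ha => by simp [ENNReal.ofReal_rpow_of_nonneg ha hγ0]
  rw [hpow]
  rcases hγ0.eq_or_lt with rfl | hγ0
  · simp
  rcases hγ1.eq_or_lt with rfl | hγ1
  · simp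
  have hHolder := ENNReal.lintegral_mul_le_Lp_mul_Lq μ
    (Real.holderConjugate_one_div hγ0 (sub_pos.2 hγ1) (add_sub_cancel γ 1))
    ((ENNReal.measurable_ofReal.comp_aemeasurable hf).pow_const γ)
    (aemeasurable_const (b := 1))
  simpa only [Pi.mul_apply, Function.comp_apply, one_div_one_div, ENNReal.one_rpow,
    lintegral_const, one_mul, ← ENNReal.rpow_mul, mul_one_div_cancel hγ0.ne', ENNReal.rpow_one]
    using hHolder

lemma compl_ball_subset_iUnion_annulus {X : Type*} [PseudoMetricSpace X] (c : X) {ρ : ℝ}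
    (hρ : 0 < ρ) :
    (Metric.ball c ρ)ᶜ ⊆
      ⋃ k : ℕ, Metric.ball c (ρ * 2 ^ (k + 1)) \ Metric.ball c (ρ * 2 ^ k) := by
  intro x hx
  rw [mem_compl_iff, Metric.mem_ball, not_lt] at hx
  obtain ⟨k, hk, hk'⟩ := exists_nat_pow_near ((one_le_div hρ).2 hx) one_lt_two
  rw [le_div_iff₀ hρ] at hk
  rw [div_lt_iff₀ hρ] at hk'
  simp only [mem_iUnion, Set.mem_sdiff, Metric.mem_ball, not_lt]
  exact ⟨k, by linarith, by linarith⟩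

/-- `8ⁿ 2^δ` bounds the contribution of the `k`-th dyadic annulus relative to `2^(-kδ)`. -/
def tailConst (n : ℕ) (δ : ℝ) : ℝ := 8 ^ n * 2 ^ δ / (1 - 2 ^ (-δ))

lemma tailConst_pos (n : ℕ) {δ : ℝ} (hδ : 0 < δ) : 0 < tailConst n δ := by
  have hq : (2 : ℝ) ^ (-δ) < 1 := Real.rpow_lt_one_of_one_lt_of_neg one_lt_two (neg_neg_of_pos hδ)
  exact div_pos (by positivity) (sub_pos.2 hq)

lemma rpow_div_rpow_mul_pow_le (n k : ℕ) {r ρ δ : ℝ} (hr : 0 < r) (hrρ : r ≤ ρ) (hδ : 0 ≤ δ) :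
    r ^ δ / (ρ * 2 ^ k / 2) ^ ((n : ℝ) + δ) * (ρ * 2 ^ (k + 2)) ^ n ≤
      8 ^ n * 2 ^ δ * ((2 : ℝ) ^ (-δ)) ^ k := by
  set a := ρ * 2 ^ k / 2
  have ha : 0 < a := by have := hr.trans_le hrρ; positivity
  have h8 : ρ * 2 ^ (k + 2) = 8 * a := by ring
  have hra : r / a ≤ 2 * (2 ^ k)⁻¹ := by
    rw [div_le_iff₀ ha, show 2 * (2 ^ k)⁻¹ * a = ρ by simp only [a]; field_simp]
    exact hrρ
  calc r ^ δ / a ^ ((n : ℝ) + δ) * (ρ * 2 ^ (k + 2)) ^ n = 8 ^ n * (r / a) ^ δ := by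
        rw [h8, Real.rpow_add ha, Real.rpow_natCast, Real.div_rpow hr.le ha.le, mul_pow]
        field_simp
    _ ≤ 8 ^ n * (2 * (2 ^ k)⁻¹) ^ δ := by gcongr
    _ = 8 ^ n * 2 ^ δ * ((2 : ℝ) ^ (-δ)) ^ k := by
        rw [Real.mul_rpow zero_le_two (by positivity), Real.inv_rpow (by positivity),
          ← Real.rpow_natCast_mul zero_le_two, ← Real.rpow_mul_natCast zero_le_two,
          neg_mul, Real.rpow_neg zero_le_two, mul_comm δ, mul_assoc]

namespace A1Bound

variable {w : Rn n → ℝ} {Cw : ℝ}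

lemma pow_mul_setIntegral_le (hA1 : A1Bound w Cw) (hCw : 0 ≤ Cw)
    (hw : LocallyIntegrable w volume) (hw0 : 0 ≤ᵐ[volume] w) (c : Rn n) {r s : ℝ} (hr : 0 < r)
    (hrs : r ≤ s) :
    r ^ n * ∫ x in cube c s, w x ≤ Cw * s ^ n * ∫ x in cube c r, w x := by
  set E := essInf w (volume.restrict (cube c s))
  have hE : ∀ᵐ x ∂volume.restrict (cube c r), E ≤ w x :=
    ae_restrict_of_ae_restrict_of_subset (cube_mono c hrs)
      (ae_essInf_le ⟨0, by simpa using ae_restrict_of_ae hw0⟩)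
  have hEr : r ^ n * E ≤ ∫ x in cube c r, w x := by
    have := setIntegral_mono_ae_restrict
      (integrableOn_const (isCompact_cube c r).measure_ne_top)
      (hw.integrableOn_isCompact (isCompact_cube c r)) hE
    simpa [measureReal_def, volume_cube c hr.le, (pow_pos hr n).le] using this
  have hs : 0 < s := hr.trans_le hrs
  have hA1s := hA1 c s hs
  rw [volume_cube c hs.le, ENNReal.toReal_ofReal (by positivity)] at hA1s
  calc r ^ n * ∫ x in cube c s, w x ≤ r ^ n * (Cw * s ^ n * E) := by gcongr
    _ = Cw * s ^ n * (r ^ n * E) := by ring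
    _ ≤ Cw * s ^ n * ∫ x in cube c r, w x := by gcongr

lemma one_le (hA1 : A1Bound w Cw) (hCw : 0 ≤ Cw) (hw : LocallyIntegrable w volume)
    (hpos : ∀ᵐ x, 0 < w x) : 1 ≤ Cw := by
  have hsupp : volume (Function.support w)ᶜ = 0 :=
    measure_mono_null (fun x hx => by simp_all) (ae_iff.1 hpos)
  have hI : 0 < ∫ x in cube 0 1, w x := by
    rw [setIntegral_pos_iff_support_of_nonneg_ae
      (ae_restrict_of_ae (hpos.mono fun _ => le_of_lt))
      (hw.integrableOn_isCompact (isCompact_cube 0 1)), inter_comm, measure_inter_conull hsupp,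
      volume_cube 0 zero_le_one]
    simp
  have := hA1.pow_mul_setIntegral_le hCw hw (hpos.mono fun _ => le_of_lt) 0 one_pos le_rfl
  simp only [one_pow, one_mul, mul_one] at this
  exact (le_mul_iff_one_le_left hI).1 this

lemma setLIntegral_le (hA1 : A1Bound w Cw) (hCw : 0 ≤ Cw) (hw : LocallyIntegrable w volume)
    (hw0 : 0 ≤ᵐ[volume] w) (c : Rn n) {r s : ℝ} (hr : 0 < r) (hrs : r ≤ s) :
    ∫⁻ x in cube c s, ENNReal.ofReal (w x) ≤
      ENNReal.ofReal Cw * (⨍⁻ x in cube c r, ENNReal.ofReal (w x) ∂volume) *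
        volume (cube c s) := by
  have hs : 0 < s := hr.trans_le hrs
  have hint {t : ℝ} : ∫⁻ x in cube c t, ENNReal.ofReal (w x) =
      ENNReal.ofReal (∫ x in cube c t, w x) :=
    (ofReal_integral_eq_lintegral_ofReal (hw.integrableOn_isCompact (isCompact_cube c t))
      (ae_restrict_of_ae hw0)).symm
  have hreal : ∫ x in cube c s, w x ≤ Cw * ((∫ x in cube c r, w x) / r ^ n) * s ^ n := by
    rw [mul_div_assoc', div_mul_eq_mul_div, le_div_iff₀ (pow_pos hr n), mul_comm]
    linarith [hA1.pow_mul_setIntegral_le hCw hw hw0 c hr hrs]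
  rw [setLAverage_eq, hint, hint, volume_cube c hr.le, volume_cube c hs.le,
    ← ENNReal.ofReal_div_of_pos (by positivity), ← ENNReal.ofReal_mul hCw,
    ← ENNReal.ofReal_mul (mul_nonneg hCw (div_nonneg
      (integral_nonneg_of_ae (ae_restrict_of_ae hw0)) (pow_pos hr n).le))]
  exact ENNReal.ofReal_le_ofReal hreal

lemma setLIntegral_rpow_le (hA1 : A1Bound w Cw) (hCw : 0 ≤ Cw) (hw : LocallyIntegrable w volume)
    (hw0 : 0 ≤ᵐ[volume] w) (c : Rn n) {r s : ℝ} (hr : 0 < r) (hrs : r ≤ s) {γ : ℝ}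
    (hγ0 : 0 ≤ γ) (hγ1 : γ ≤ 1) :
    ∫⁻ x in cube c s, ENNReal.ofReal (w x ^ γ) ≤
      (ENNReal.ofReal Cw * ⨍⁻ x in cube c r, ENNReal.ofReal (w x) ∂volume) ^ γ *
        volume (cube c s) := by
  set W := ⨍⁻ x in cube c r, ENNReal.ofReal (w x) ∂volume
  calc ∫⁻ x in cube c s, ENNReal.ofReal (w x ^ γ)
      ≤ (∫⁻ x in cube c s, ENNReal.ofReal (w x)) ^ γ * volume (cube c s) ^ (1 - γ) := by
        simpa using lintegral_ofReal_rpow_le hw.aestronglyMeasurable.aemeasurable.restrict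
          (ae_restrict_of_ae hw0) hγ0 hγ1
    _ ≤ (ENNReal.ofReal Cw * W * volume (cube c s)) ^ γ * volume (cube c s) ^ (1 - γ) := by
        gcongr; exact hA1.setLIntegral_le hCw hw hw0 c hr hrs
    _ = _ := by
        rw [ENNReal.mul_rpow_of_nonneg _ _ hγ0, mul_assoc, ← ENNReal.rpow_add_of_nonneg _ _ hγ0
          (sub_nonneg.2 hγ1), add_sub_cancel, ENNReal.rpow_one]

lemma setLIntegral_annulus_le (hA1 : A1Bound w Cw) (hCw : 0 ≤ Cw)
    (hw : LocallyIntegrable w volume) (hw0 : 0 ≤ᵐ[volume] w) (hn : 0 < n) {δ γ : ℝ} (hδ : 0 ≤ δ)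
    (hγ0 : 0 ≤ γ) (hγ1 : γ ≤ 1) {c y : Rn n} {r : ℝ} (hr : 0 < r) (hy : y ∈ cube c r) (k : ℕ) :
    ∫⁻ x in Metric.ball c (√n * r * 2 ^ (k + 1)) \ Metric.ball c (√n * r * 2 ^ k),
        ENNReal.ofReal (r ^ δ * w x ^ γ / ‖x - y‖ ^ ((n : ℝ) + δ)) ≤
      ENNReal.ofReal (8 ^ n * 2 ^ δ) *
        (ENNReal.ofReal Cw * ⨍⁻ x in cube c r, ENNReal.ofReal (w x) ∂volume) ^ γ *
          ENNReal.ofReal (2 ^ (-δ)) ^ k := by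
  set ρ := √n * r
  set S := Metric.ball c (ρ * 2 ^ (k + 1)) \ Metric.ball c (ρ * 2 ^ k)
  set W := ⨍⁻ x in cube c r, ENNReal.ofReal (w x) ∂volume
  have hrρ : r ≤ ρ := le_mul_of_one_le_left hr.le (Real.one_le_sqrt.2 (by exact_mod_cast hn))
  have hρ : 0 < ρ := hr.trans_le hrρ
  have hρk : ρ ≤ ρ * 2 ^ k := le_mul_of_one_le_right hρ.le (one_le_pow₀ one_le_two)
  set D := r ^ δ / (ρ * 2 ^ k / 2) ^ ((n : ℝ) + δ)
  have hkernel : ∀ᵐ x ∂volume.restrict S,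
      ENNReal.ofReal (r ^ δ * w x ^ γ / ‖x - y‖ ^ ((n : ℝ) + δ)) ≤
        ENNReal.ofReal D * ENNReal.ofReal (w x ^ γ) := by
    filter_upwards [ae_restrict_mem (by measurability), ae_restrict_of_ae hw0] with x hx hwx
    have hxc : ρ * 2 ^ k ≤ ‖x - c‖ := by simpa [dist_eq_norm] using hx.2
    have hyc : ‖y - c‖ ≤ ρ / 2 := norm_sub_le_of_mem_cube hr.le hy
    have hxy : ρ * 2 ^ k / 2 ≤ ‖x - y‖ := by
      have := norm_sub_norm_le (x - c) (y - c)
      rw [sub_sub_sub_cancel_right] at this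
      linarith
    have := Real.rpow_nonneg hwx γ
    rw [← ENNReal.ofReal_mul (by positivity), div_mul_eq_mul_div]
    gcongr
  have hS : S ⊆ cube c (ρ * 2 ^ (k + 2)) :=
    sdiff_subset.trans ((Metric.ball_subset_ball (le_of_eq (by ring))).trans (ball_subset_cube _ _))
  calc ∫⁻ x in S, ENNReal.ofReal (r ^ δ * w x ^ γ / ‖x - y‖ ^ ((n : ℝ) + δ))
      ≤ ∫⁻ x in S, ENNReal.ofReal D * ENNReal.ofReal (w x ^ γ) := lintegral_mono_ae hkernel
    _ = ENNReal.ofReal D * ∫⁻ x in S, ENNReal.ofReal (w x ^ γ) :=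
        lintegral_const_mul' _ _ ENNReal.ofReal_ne_top
    _ ≤ ENNReal.ofReal D * ∫⁻ x in cube c (ρ * 2 ^ (k + 2)), ENNReal.ofReal (w x ^ γ) := by
        gcongr
    _ ≤ ENNReal.ofReal D * ((ENNReal.ofReal Cw * W) ^ γ * volume (cube c (ρ * 2 ^ (k + 2)))) := by
        gcongr
        refine hA1.setLIntegral_rpow_le hCw hw hw0 c hr (hrρ.trans (hρk.trans ?_)) hγ0 hγ1
        gcongr <;> norm_num
    _ = ENNReal.ofReal (D * (ρ * 2 ^ (k + 2)) ^ n) * (ENNReal.ofReal Cw * W) ^ γ := by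
        rw [volume_cube c (by positivity), ENNReal.ofReal_mul (by positivity)]; ring
    _ ≤ ENNReal.ofReal (8 ^ n * 2 ^ δ * ((2 : ℝ) ^ (-δ)) ^ k) * (ENNReal.ofReal Cw * W) ^ γ := by
        gcongr ?_ * _
        exact ENNReal.ofReal_le_ofReal (rpow_div_rpow_mul_pow_le n k hr hrρ hδ)
    _ = _ := by
        rw [ENNReal.ofReal_mul (by positivity), ENNReal.ofReal_pow (by positivity)]; ring

lemma setLIntegral_compl_cube_le (hA1 : A1Bound w Cw) (hCw : 0 ≤ Cw)
    (hw : LocallyIntegrable w volume) (hw0 : 0 ≤ᵐ[volume] w) (hn : 0 < n) {δ γ : ℝ} (hδ : 0 < δ)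
    (hγ0 : 0 ≤ γ) (hγ1 : γ ≤ 1) {c y : Rn n} {r : ℝ} (hr : 0 < r) (hy : y ∈ cube c r) :
    ∫⁻ x in (cube c (2 * √n * r))ᶜ, ENNReal.ofReal (r ^ δ * w x ^ γ / ‖x - y‖ ^ ((n : ℝ) + δ)) ≤
      ENNReal.ofReal (tailConst n δ) *
        (ENNReal.ofReal Cw * ⨍⁻ x in cube c r, ENNReal.ofReal (w x) ∂volume) ^ γ := by
  set S : ℕ → Set (Rn n) := fun k => Metric.ball c (√n * r * 2 ^ (k + 1)) \
    Metric.ball c (√n * r * 2 ^ k)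
  set W := ⨍⁻ x in cube c r, ENNReal.ofReal (w x) ∂volume
  have hcover : (cube c (2 * √n * r))ᶜ ⊆ ⋃ k, S k := by
    refine (compl_subset_compl.2 ?_).trans (compl_ball_subset_iUnion_annulus c
      (mul_pos (Real.sqrt_pos.2 (by exact_mod_cast hn)) hr))
    simpa [mul_assoc] using ball_subset_cube c (2 * √n * r)
  have hq : (2 : ℝ) ^ (-δ) < 1 := Real.rpow_lt_one_of_one_lt_of_neg one_lt_two (neg_neg_of_pos hδ)
  calc ∫⁻ x in (cube c (2 * √n * r))ᶜ, ENNReal.ofReal (r ^ δ * w x ^ γ / ‖x - y‖ ^ ((n : ℝ) + δ))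
      ≤ ∑' k, ∫⁻ x in S k, ENNReal.ofReal (r ^ δ * w x ^ γ / ‖x - y‖ ^ ((n : ℝ) + δ)) :=
        (lintegral_mono_set hcover).trans (lintegral_iUnion_le _ _)
    _ ≤ ∑' k : ℕ, ENNReal.ofReal (8 ^ n * 2 ^ δ) * (ENNReal.ofReal Cw * W) ^ γ *
          ENNReal.ofReal (2 ^ (-δ)) ^ k :=
        ENNReal.tsum_le_tsum fun k =>
          hA1.setLIntegral_annulus_le hCw hw hw0 hn hδ.le hγ0 hγ1 hr hy k
    _ = _ := by
        rw [ENNReal.tsum_mul_left, ENNReal.tsum_geometric, ← ENNReal.ofReal_one, tailConst,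
          ← ENNReal.ofReal_sub _ (by positivity), ENNReal.ofReal_div_of_pos (sub_pos.2 hq),
          div_eq_mul_inv]
        ring

lemma setLIntegral_mul_setLIntegral_compl_cube_le (hA1 : A1Bound w Cw) (hCw : 0 ≤ Cw)
    (hw : LocallyIntegrable w volume) (hw0 : 0 ≤ᵐ[volume] w) (hn : 0 < n) {δ p γ : ℝ}
    (hδ : 0 < δ) (hp : 0 ≤ p) (hγ : 0 ≤ γ) (hpγ : p + γ = 1) (c : Rn n) {r : ℝ} (hr : 0 < r) :
    ∫⁻ y in cube c r, ENNReal.ofReal (w y ^ p) *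
        ∫⁻ x in (cube c (2 * √n * r))ᶜ,
          ENNReal.ofReal (r ^ δ * w x ^ γ / ‖x - y‖ ^ ((n : ℝ) + δ)) ≤
      ENNReal.ofReal (tailConst n δ * Cw ^ γ) * ∫⁻ x in cube c r, ENNReal.ofReal (w x) := by
  set K := ENNReal.ofReal (tailConst n δ)
  set A := ∫⁻ x in cube c r, ENNReal.ofReal (w x)
  have hWA : (⨍⁻ x in cube c r, ENNReal.ofReal (w x) ∂volume) * volume (cube c r) = A := by
    rw [setLAverage_eq, volume_cube c hr.le]
    exact ENNReal.div_mul_cancel (by simp [pow_pos hr n]) ENNReal.ofReal_ne_top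
  set W := ⨍⁻ x in cube c r, ENNReal.ofReal (w x) ∂volume
  have hwp : AEMeasurable (fun y => ENNReal.ofReal (w y ^ p)) (volume.restrict (cube c r)) :=
    (ENNReal.measurable_ofReal.comp_aemeasurable
      (hw.aestronglyMeasurable.aemeasurable.pow_const p)).restrict
  calc ∫⁻ y in cube c r, ENNReal.ofReal (w y ^ p) *
        ∫⁻ x in (cube c (2 * √n * r))ᶜ, ENNReal.ofReal (r ^ δ * w x ^ γ / ‖x - y‖ ^ ((n : ℝ) + δ))
      ≤ ∫⁻ y in cube c r, ENNReal.ofReal (w y ^ p) * (K * (ENNReal.ofReal Cw * W) ^ γ) :=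
        setLIntegral_mono' (measurableSet_cube c r) fun y hy => by
          gcongr; exact hA1.setLIntegral_compl_cube_le hCw hw hw0 hn hδ hγ (by linarith) hr hy
    _ = (∫⁻ y in cube c r, ENNReal.ofReal (w y ^ p)) * (K * (ENNReal.ofReal Cw * W) ^ γ) :=
        lintegral_mul_const'' _ hwp
    _ ≤ (A ^ p * volume (cube c r) ^ γ) * (K * (ENNReal.ofReal Cw * W) ^ γ) := by
        gcongr
        simpa [← hpγ] using lintegral_ofReal_rpow_le hw.aestronglyMeasurable.aemeasurable.restrict
          (ae_restrict_of_ae hw0) hp (by linarith)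
    _ = K * ENNReal.ofReal Cw ^ γ * (A ^ p * (W * volume (cube c r)) ^ γ) := by
        rw [ENNReal.mul_rpow_of_nonneg _ _ hγ, ENNReal.mul_rpow_of_nonneg _ _ hγ]; ring
    _ = _ := by
        rw [hWA, ← ENNReal.rpow_add_of_nonneg _ _ hp hγ, hpγ, ENNReal.rpow_one,
          ENNReal.ofReal_mul (tailConst_pos n hδ).le, ENNReal.ofReal_rpow_of_nonneg hCw hγ]

end A1Bound

end

/-- For `w ∈ A₁` and pairwise disjoint cubes `Q_j = Q(c_j,r_j)` with union `Ω` and dilated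
union `Ω* = ⋃ 2√n Q_j`:
`∑_j ∫_{Q_j} w^{1/m}(y) ∫_{ℝⁿ∖Ω*} r_j^δ w(x)^{(m-1)/m} |x-y|^{-n-δ} dx dy
  ≤ C [w]_{A₁}^{(2m-2)/m} w(Ω)`. -/
theorem stmt13 (n m : ℕ) (hn : 0 < n) (hm : 0 < m) (δ : ℝ) (hδ : 0 < δ) :
    ∃ C : ℝ, 0 < C ∧
      ∀ (w : Rn n → ℝ) (Cw : ℝ),
        LocallyIntegrable w volume → (∀ᵐ x, 0 < w x) → 0 ≤ Cw → A1Bound w Cw →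
      ∀ (cen : ℕ → Rn n) (rad : ℕ → ℝ), (∀ j, 0 < rad j) →
        (Pairwise fun j k => Disjoint (cube (cen j) (rad j)) (cube (cen k) (rad k))) →
        ∑' j : ℕ,
            ∫⁻ y in cube (cen j) (rad j),
              ENNReal.ofReal (w y ^ ((1 : ℝ) / m)) *
                ∫⁻ x in (⋃ j' : ℕ, cube (cen j') (2 * Real.sqrt n * rad j'))ᶜ,
                  ENNReal.ofReal
                    (rad j ^ δ * w x ^ (((m : ℝ) - 1) / m) / ‖x - y‖ ^ ((n : ℝ) + δ)) ≤
          ENNReal.ofReal (C * Cw ^ ((2 * (m : ℝ) - 2) / m)) *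
            ∫⁻ x in ⋃ j : ℕ, cube (cen j) (rad j), ENNReal.ofReal (w x) := by
  refine ⟨tailConst n δ, tailConst_pos n hδ, ?_⟩
  intro w Cw hw hpos hCw hA1 cen rad hrad hdisj
  have hm' : (1 : ℝ) ≤ m := by exact_mod_cast hm
  have hγ : ((m : ℝ) - 1) / m ≤ (2 * (m : ℝ) - 2) / m :=
    div_le_div_of_nonneg_right (by linarith) (by positivity)
  calc _ ≤ ∑' j : ℕ, ∫⁻ y in cube (cen j) (rad j), ENNReal.ofReal (w y ^ ((1 : ℝ) / m)) *
          ∫⁻ x in (cube (cen j) (2 * √n * rad j))ᶜ,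
            ENNReal.ofReal (rad j ^ δ * w x ^ (((m : ℝ) - 1) / m) / ‖x - y‖ ^ ((n : ℝ) + δ)) := by
        gcongr with j
        exact subset_iUnion (fun j' => cube (cen j') (2 * √n * rad j')) j
    _ ≤ ∑' j : ℕ, ENNReal.ofReal (tailConst n δ * Cw ^ (((m : ℝ) - 1) / m)) *
          ∫⁻ x in cube (cen j) (rad j), ENNReal.ofReal (w x) :=
        ENNReal.tsum_le_tsum fun j => hA1.setLIntegral_mul_setLIntegral_compl_cube_le hCw hw
          (hpos.mono fun _ => le_of_lt) hn hδ (by positivity)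
          (div_nonneg (by linarith) (by positivity)) (by field_simp; ring) (cen j) (hrad j)
    _ = ENNReal.ofReal (tailConst n δ * Cw ^ (((m : ℝ) - 1) / m)) *
          ∫⁻ x in ⋃ j : ℕ, cube (cen j) (rad j), ENNReal.ofReal (w x) := by
        rw [ENNReal.tsum_mul_left, lintegral_iUnion (fun j => measurableSet_cube _ _) hdisj]
    _ ≤ _ := by
        gcongr ENNReal.ofReal (_ * ?_) * _
        · exact (tailConst_pos n hδ).le
        · exact Real.rpow_le_rpow_of_exponent_le (hA1.one_le hCw hw hpos) hγ
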